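/- Let X be the quotient of R̃ × S¹ by the equivalence relation generated by (u, z) ∼ (−u, z) and (u, z) ∼ (σ(u), −z), where σ(u) = (−u₁, −u₂, −u₃, −u₄, u₅, u₆, u₇, u₈), equipped with the quotient topology. Then the assignment [(u, z)] ↦ z² is a well-defined continuous map X → S¹ which is a locally trivial fiber bundle whose fiber is homeomorphic to R, the quotient of R̃ by the antipodal map u ↦ −u. -/

import Mathlib

/-- `R̃ ⊂ ℝ⁸`: the set of `u` with `u₁² + ⋯ + u₈² = 1` and
`u₁² + u₂² + u₃² + u₄² = u₅² + u₆² + u₇² + u₈²`, with the subspace topology. -/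
def Rtilde : Set (EuclideanSpace ℝ (Fin 8)) :=
  {u | u 0 ^ 2 + u 1 ^ 2 + u 2 ^ 2 + u 3 ^ 2 + u 4 ^ 2 + u 5 ^ 2 + u 6 ^ 2 + u 7 ^ 2 = 1 ∧
       u 0 ^ 2 + u 1 ^ 2 + u 2 ^ 2 + u 3 ^ 2 = u 4 ^ 2 + u 5 ^ 2 + u 6 ^ 2 + u 7 ^ 2}

/-- The involution `σ(u) = (−u₁, −u₂, −u₃, −u₄, u₅, u₆, u₇, u₈)` of `ℝ⁸`. -/
def sigmaInv (u : EuclideanSpace ℝ (Fin 8)) : EuclideanSpace ℝ (Fin 8) :=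
  WithLp.toLp 2 (fun j : Fin 8 => if (j : ℕ) < 4 then -u j else u j)

/-- The unit circle in `ℂ`. -/
abbrev Circle1 : Type := Metric.sphere (0 : ℂ) 1

/-- The relations `(u, z) ∼ (−u, z)` and `(u, z) ∼ (σ(u), −z)` on `R̃ × S¹`. -/
def cobRel (p q : Rtilde × Circle1) : Prop :=
  ((q.1 : EuclideanSpace ℝ (Fin 8)) = -(p.1 : EuclideanSpace ℝ (Fin 8)) ∧ q.2 = p.2) ∨
  ((q.1 : EuclideanSpace ℝ (Fin 8)) = sigmaInv (p.1 : EuclideanSpace ℝ (Fin 8)) ∧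
    (q.2 : ℂ) = -(p.2 : ℂ))

/-- The quotient `X = (R̃ × S¹)/∼`, with the quotient topology. -/
def Xquot : Type := Quot cobRel

noncomputable instance : TopologicalSpace Xquot := by unfold Xquot; infer_instance

/-- `R`: the quotient of `R̃` by the antipodal map, with the quotient topology. -/
def Rquot : Type := Quot (fun u v : Rtilde =>
  (v : EuclideanSpace ℝ (Fin 8)) = -(u : EuclideanSpace ℝ (Fin 8)))

noncomputable instance : TopologicalSpace Rquot := by unfold Rquot; infer_instance

/-- The square of an element of the unit circle. -/
noncomputable def circleSq (z : Circle1) : Circle1 :=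
  ⟨(z : ℂ) ^ 2, by
    have hz : ‖(z : ℂ)‖ = 1 := mem_sphere_zero_iff_norm.mp z.2
    simp [mem_sphere_zero_iff_norm, norm_pow, hz]⟩

/-! Fix `c ∈ S¹`. On `U = S¹ ∖ {-c²}` the squaring map has the continuous section
`w ↦ c · √(w / c²)` through `c`, so every `z` with `z² ∈ U` lies on exactly one of two sheets:
`z` is that square root of `z²`, or `-z` is. Moving points of the second sheet to the first by
`(u, z) ∼ (σ u, -z)`, the map `[(u, z)] ↦ (z², [u])` is well defined on `X`, with inverse
`(w, [u]) ↦ [(u, √w)]`. Both are continuous over `U`: the sheets are the open half-circles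
`± re (z / c) > 0`, and `R̃ → R` is an open quotient map, so `U × R̃ → U × R` is a quotient map. -/

open Complex Topology Function

section InvolutionQuotient

variable {α : Type*} {r : α → α → Prop} {ι : α → α}

theorem Quot.mk_eq_mk_iff_of_involutive (hι : Involutive ι) (hr : ∀ x y, r x y ↔ y = ι x)
    {x y : α} : Quot.mk r x = Quot.mk r y ↔ y = x ∨ y = ι x := by
  have hequiv : Equivalence fun x y : α => y = x ∨ y = ι x := by
    refine ⟨fun _ => Or.inl rfl, ?_, ?_⟩ <;> grind [Involutive]
  rw [Quot.eq]
  refine ⟨fun h => hequiv.eqvGen_iff.mp (h.mono fun x y hxy => Or.inr ((hr x y).mp hxy)), ?_⟩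
  rintro (rfl | rfl)
  · exact .refl _
  · exact .rel _ _ ((hr _ _).mpr rfl)

theorem isOpenQuotientMap_quot_mk_of_involutive [TopologicalSpace α] (hι : Involutive ι)
    (hιc : Continuous ι) (hr : ∀ x y, r x y ↔ y = ι x) : IsOpenQuotientMap (Quot.mk r) := by
  refine ⟨Quot.mk_surjective, continuous_quot_mk, fun W hW => ?_⟩
  rw [← isQuotientMap_quot_mk.isOpen_preimage]
  have hsat : Quot.mk r ⁻¹' (Quot.mk r '' W) = W ∪ ι ⁻¹' W := by
    ext x
    simp only [Set.mem_preimage, Set.mem_image, Set.mem_union,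
      Quot.mk_eq_mk_iff_of_involutive hι hr]
    grind [Involutive]
  rw [hsat]
  exact hW.union (hW.preimage hιc)

end InvolutionQuotient

theorem Topology.IsQuotientMap.continuousOn_iff_of_isOpen {X Y Z : Type*} [TopologicalSpace X]
    [TopologicalSpace Y] [TopologicalSpace Z] {π : X → Y} (hπ : IsQuotientMap π) {s : Set Y}
    (hs : IsOpen s) {f : Y → Z} : ContinuousOn f s ↔ ContinuousOn (f ∘ π) (π ⁻¹' s) := by
  rw [continuousOn_iff_continuous_domRestrict, continuousOn_iff_continuous_domRestrict,
    (hπ.restrictPreimage_isOpen hs).continuous_iff]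
  rfl

namespace Complex

theorem sq_mem_slitPlane_iff (ζ : ℂ) : ζ ^ 2 ∈ slitPlane ↔ ζ.re ≠ 0 := by
  rw [mem_slitPlane_iff, sq, mul_re, mul_im]
  constructor
  · rintro (h | h) hre
    · rw [hre] at h
      nlinarith [sq_nonneg ζ.im]
    · simp [hre] at h
  · intro hre
    by_cases him : ζ.im = 0
    · left
      rw [him, mul_zero, sub_zero]
      exact mul_self_pos.mpr hre
    · right
      intro h
      exact mul_ne_zero hre him (by linarith)

theorem cpow_inv_two_re_pos {x : ℂ} (hx : x ∈ slitPlane) : 0 < (x ^ (2⁻¹ : ℂ)).re := by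
  rw [cpow_inv_two_re, Real.sqrt_pos]
  rcases mem_slitPlane_iff.mp hx with h | h
  · linarith [abs_re_le_norm x, abs_nonneg x.re]
  · linarith [neg_abs_le x.re, abs_re_lt_norm.mpr h]

theorem sq_cpow_inv_two_eq_self_iff {ζ : ℂ} (hζ : ζ.re ≠ 0) :
    (ζ ^ 2) ^ (2⁻¹ : ℂ) = ζ ↔ 0 < ζ.re := by
  have hpos := cpow_inv_two_re_pos ((sq_mem_slitPlane_iff ζ).mpr hζ)
  refine ⟨fun h => h ▸ hpos, fun h => ?_⟩
  rcases sq_eq_sq_iff_eq_or_eq_neg.mp (cpow_ofNat_inv_pow (ζ ^ 2) 2) with h' | h'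
  · exact h'
  · rw [h', neg_re] at hpos; linarith

end Complex

noncomputable def sqrtNear (c w : ℂ) : ℂ := c * (w / c ^ 2) ^ (2⁻¹ : ℂ)

theorem sqrtNear_sq {c : ℂ} (hc : c ≠ 0) (w : ℂ) : sqrtNear c w ^ 2 = w := by
  rw [sqrtNear, mul_pow, cpow_ofNat_inv_pow]
  field_simp

theorem sqrtNear_sq_eq_iff {c z : ℂ} (hc : c ≠ 0) (h : (z / c).re ≠ 0) :
    sqrtNear c (z ^ 2) = z ↔ 0 < (z / c).re := by
  rw [← sq_cpow_inv_two_eq_self_iff h, sqrtNear, div_pow, eq_div_iff hc, mul_comm]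

theorem continuousAt_sqrtNear {c w : ℂ} (h : w / c ^ 2 ∈ slitPlane) :
    ContinuousAt (sqrtNear c) w :=
  continuousAt_const.mul <| ContinuousAt.comp (g := (· ^ (2⁻¹ : ℂ)))
    (continuousAt_cpow_const h) (continuousAt_id.div_const _)

namespace Circle1

theorem coe_ne_zero (z : Circle1) : (z : ℂ) ≠ 0 := ne_zero_of_mem_unit_sphere z

theorem neg_ne_self (z : Circle1) : -z ≠ z := fun h =>
  z.coe_ne_zero (CharZero.neg_eq_self_iff.mp (congrArg Subtype.val h))

end Circle1

noncomputable def circleSqrtNear (c w : Circle1) : Circle1 :=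
  ⟨sqrtNear c w, by
    have h : ‖sqrtNear c w‖ ^ 2 = 1 := by
      rw [← norm_pow, sqrtNear_sq c.coe_ne_zero, mem_sphere_zero_iff_norm.mp w.2]
    exact mem_sphere_zero_iff_norm.mpr
      ((pow_eq_one_iff_of_nonneg (norm_nonneg _) two_ne_zero).mp h)⟩

theorem circleSq_circleSqrtNear (c w : Circle1) : circleSq (circleSqrtNear c w) = w :=
  Subtype.ext (sqrtNear_sq c.coe_ne_zero w)

theorem circleSq_surjective : Surjective circleSq :=
  fun w => ⟨circleSqrtNear w w, circleSq_circleSqrtNear w w⟩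

theorem circleSqrtNear_circleSq_eq_or (c z : Circle1) :
    circleSqrtNear c (circleSq z) = z ∨ circleSqrtNear c (circleSq z) = -z := by
  simp only [Subtype.ext_iff, coe_neg_sphere]
  exact sq_eq_sq_iff_eq_or_eq_neg.mp (sqrtNear_sq c.coe_ne_zero _)

theorem circleSqrtNear_circleSq_eq_iff {c z : Circle1} (h : ((z : ℂ) / c).re ≠ 0) :
    circleSqrtNear c (circleSq z) = z ↔ 0 < ((z : ℂ) / c).re :=
  Subtype.ext_iff.trans (sqrtNear_sq_eq_iff c.coe_ne_zero h)

def slitCircle (c : Circle1) : Set Circle1 := {w | (w : ℂ) / (c : ℂ) ^ 2 ∈ slitPlane}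

theorem isOpen_slitCircle (c : Circle1) : IsOpen (slitCircle c) :=
  isOpen_slitPlane.preimage (continuous_subtype_val.div_const _)

theorem circleSq_mem_slitCircle_iff {c z : Circle1} :
    circleSq z ∈ slitCircle c ↔ ((z : ℂ) / c).re ≠ 0 := by
  rw [← sq_mem_slitPlane_iff, div_pow]
  rfl

theorem circleSq_mem_slitCircle (c : Circle1) : circleSq c ∈ slitCircle c := by
  rw [circleSq_mem_slitCircle_iff, div_self c.coe_ne_zero, one_re]
  exact one_ne_zero

theorem continuousOn_circleSqrtNear (c : Circle1) :
    ContinuousOn (circleSqrtNear c) (slitCircle c) := fun _ hw =>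
  IsInducing.subtypeVal.continuousWithinAt_iff.mpr
    ((continuousAt_sqrtNear hw).comp_continuousWithinAt continuous_subtype_val.continuousWithinAt)

local notation "E8" => EuclideanSpace ℝ (Fin 8)

theorem sigmaInv_sigmaInv (u : E8) : sigmaInv (sigmaInv u) = u := by
  ext j
  simp only [sigmaInv, PiLp.toLp_apply]
  split_ifs <;> simp

theorem sigmaInv_neg (u : E8) : sigmaInv (-u) = -sigmaInv u := by
  ext j
  simp only [sigmaInv, PiLp.toLp_apply, PiLp.neg_apply]
  split_ifs <;> simp

theorem continuous_sigmaInv : Continuous sigmaInv := by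
  refine (PiLp.continuous_toLp 2 _).comp (continuous_pi fun j => ?_)
  split_ifs <;> fun_prop

theorem neg_mem_Rtilde {u : E8} (hu : u ∈ Rtilde) : -u ∈ Rtilde := by
  simpa [Rtilde] using hu

theorem sigmaInv_mem_Rtilde {u : E8} (hu : u ∈ Rtilde) : sigmaInv u ∈ Rtilde := by
  simpa [Rtilde, sigmaInv] using hu

theorem Rtilde_nonempty : Rtilde.Nonempty :=
  ⟨WithLp.toLp 2 ![1 / 2, 1 / 2, 0, 0, 1 / 2, 1 / 2, 0, 0], by simp [Rtilde]; norm_num⟩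

def rtildeNeg (u : Rtilde) : Rtilde := ⟨-u, neg_mem_Rtilde u.2⟩

def rtildeSigma (u : Rtilde) : Rtilde := ⟨sigmaInv u, sigmaInv_mem_Rtilde u.2⟩

theorem rtildeNeg_involutive : Involutive rtildeNeg := fun u => Subtype.ext (neg_neg (u : E8))

theorem rtildeSigma_involutive : Involutive rtildeSigma := fun u =>
  Subtype.ext (sigmaInv_sigmaInv u)

theorem rtildeSigma_rtildeNeg (u : Rtilde) :
    rtildeSigma (rtildeNeg u) = rtildeNeg (rtildeSigma u) :=
  Subtype.ext (sigmaInv_neg u)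

theorem continuous_rtildeNeg : Continuous rtildeNeg := continuous_subtype_val.neg.subtype_mk _

theorem continuous_rtildeSigma : Continuous rtildeSigma :=
  (continuous_sigmaInv.comp continuous_subtype_val).subtype_mk _

namespace Rquot

def mk : Rtilde → Rquot := Quot.mk fun u v : Rtilde => (v : E8) = -(u : E8)

theorem isOpenQuotientMap_mk : IsOpenQuotientMap mk :=
  isOpenQuotientMap_quot_mk_of_involutive rtildeNeg_involutive continuous_rtildeNeg
    fun _ _ => ⟨fun h => Subtype.ext h, congrArg Subtype.val⟩

theorem mk_rtildeNeg (u : Rtilde) : mk (rtildeNeg u) = mk u :=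
  (Quot.sound (r := fun u v : Rtilde => (v : E8) = -(u : E8)) rfl).symm

end Rquot

namespace Xquot

def mk : Rtilde × Circle1 → Xquot := Quot.mk cobRel

theorem isQuotientMap_mk : IsQuotientMap mk := isQuotientMap_quot_mk

theorem mk_rtildeSigma_neg (u : Rtilde) (z : Circle1) : mk (rtildeSigma u, -z) = mk (u, z) :=
  (Quot.sound (r := cobRel) (Or.inr ⟨rfl, coe_neg_sphere z⟩)).symm

noncomputable def proj : Xquot → Circle1 :=
  Quot.lift (fun p => circleSq p.2) <| by
    rintro ⟨_, z⟩ ⟨_, w⟩ (⟨-, rfl⟩ | ⟨-, hzw⟩)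
    · rfl
    · exact Subtype.ext (show (z : ℂ) ^ 2 = (w : ℂ) ^ 2 by rw [hzw, neg_sq])

theorem proj_mk (p : Rtilde × Circle1) : proj (mk p) = circleSq p.2 := rfl

theorem continuous_proj : Continuous proj :=
  isQuotientMap_mk.continuous_iff.mpr
    (((continuous_subtype_val.pow 2).subtype_mk _).comp continuous_snd)

theorem surjective_proj : Surjective proj := fun w =>
  ⟨mk (⟨_, Rtilde_nonempty.some_mem⟩, circleSqrtNear w w), circleSq_circleSqrtNear w w⟩

-- On the second sheet `(u, z)` is first replaced by its representative `(σ u, -z)`.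
open Classical in
noncomputable def sheetCoord (c : Circle1) (p : Rtilde × Circle1) : Rquot :=
  if circleSqrtNear c (circleSq p.2) = p.2 then Rquot.mk p.1 else Rquot.mk (rtildeSigma p.1)

theorem sheetCoord_rtildeNeg (c : Circle1) (u : Rtilde) (z : Circle1) :
    sheetCoord c (rtildeNeg u, z) = sheetCoord c (u, z) := by
  simp only [sheetCoord, rtildeSigma_rtildeNeg, Rquot.mk_rtildeNeg]

theorem sheetCoord_rtildeSigma_neg (c : Circle1) (u : Rtilde) (z : Circle1) :
    sheetCoord c (rtildeSigma u, -z) = sheetCoord c (u, z) := by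
  have hsq : circleSq (-z) = circleSq z := Subtype.ext (neg_sq (z : ℂ))
  rcases circleSqrtNear_circleSq_eq_or c z with h | h <;>
    simp [sheetCoord, hsq, h, z.neg_ne_self, z.neg_ne_self.symm, rtildeSigma_involutive u]

theorem sheetCoord_respects (c : Circle1) :
    ∀ p q : Rtilde × Circle1, cobRel p q → sheetCoord c p = sheetCoord c q := by
  rintro ⟨u, z⟩ ⟨v, w⟩ (⟨huv, rfl⟩ | ⟨huv, hzw⟩)
  · obtain rfl : v = rtildeNeg u := Subtype.ext huv
    exact (sheetCoord_rtildeNeg c u _).symm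
  · obtain rfl : v = rtildeSigma u := Subtype.ext huv
    obtain rfl : w = -z := Subtype.ext hzw
    exact (sheetCoord_rtildeSigma_neg c u z).symm

noncomputable def fiberCoord (c : Circle1) : Xquot → Rquot :=
  Quot.lift (sheetCoord c) (sheetCoord_respects c)

theorem fiberCoord_mk (c : Circle1) (p : Rtilde × Circle1) :
    fiberCoord c (mk p) = sheetCoord c p := rfl

theorem continuousOn_sheetCoord (c : Circle1) :
    ContinuousOn (sheetCoord c) {p | ((p.2 : ℂ) / c).re ≠ 0} := by
  classical
  have hre : Continuous fun p : Rtilde × Circle1 => ((p.2 : ℂ) / c).re := by fun_prop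
  have hsheet : ContinuousOn (fun p : Rtilde × Circle1 =>
      if 0 < ((p.2 : ℂ) / c).re then Rquot.mk p.1 else Rquot.mk (rtildeSigma p.1))
      {p | ((p.2 : ℂ) / c).re ≠ 0} := by
    refine ContinuousOn.if (fun p ⟨hp, hfr⟩ =>
      absurd (frontier_lt_subset_eq continuous_const hre hfr).symm hp) ?_ ?_
    · exact (Rquot.isOpenQuotientMap_mk.continuous.comp continuous_fst).continuousOn
    · exact ((Rquot.isOpenQuotientMap_mk.continuous.comp continuous_rtildeSigma).comp
        continuous_fst).continuousOn
  -- Off `re (z / c) = 0` the sheet test is the open condition `0 < re (z / c)`.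
  refine hsheet.congr fun p hp => ?_
  simp only [sheetCoord, circleSqrtNear_circleSq_eq_iff hp]

theorem continuousOn_fiberCoord (c : Circle1) :
    ContinuousOn (fiberCoord c) (proj ⁻¹' slitCircle c) :=
  (isQuotientMap_mk.continuousOn_iff_of_isOpen
    ((isOpen_slitCircle c).preimage continuous_proj)).mpr
    ((continuousOn_sheetCoord c).mono fun _ hp => circleSq_mem_slitCircle_iff.mp hp)

noncomputable def ofProd (c : Circle1) (y : Circle1 × Rquot) : Xquot :=
  Quot.lift (fun u => mk (u, circleSqrtNear c y.1))
    (fun _ _ huv => Quot.sound (Or.inl ⟨huv, rfl⟩)) y.2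

theorem ofProd_mk (c w : Circle1) (u : Rtilde) :
    ofProd c (w, Rquot.mk u) = mk (u, circleSqrtNear c w) := rfl

theorem proj_ofProd (c : Circle1) (y : Circle1 × Rquot) : proj (ofProd c y) = y.1 := by
  obtain ⟨w, r⟩ := y
  obtain ⟨u, rfl⟩ := Rquot.isOpenQuotientMap_mk.surjective r
  exact circleSq_circleSqrtNear c w

theorem fiberCoord_ofProd (c : Circle1) (y : Circle1 × Rquot) :
    fiberCoord c (ofProd c y) = y.2 := by
  obtain ⟨w, r⟩ := y
  obtain ⟨u, rfl⟩ := Rquot.isOpenQuotientMap_mk.surjective r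
  simp [ofProd_mk, fiberCoord_mk, sheetCoord, circleSq_circleSqrtNear]

theorem ofProd_proj_fiberCoord (c : Circle1) (x : Xquot) :
    ofProd c (proj x, fiberCoord c x) = x := by
  obtain ⟨⟨u, z⟩, rfl⟩ := isQuotientMap_mk.surjective x
  rcases circleSqrtNear_circleSq_eq_or c z with h | h
  · simp [fiberCoord_mk, sheetCoord, h, proj_mk, ofProd_mk]
  · simp [fiberCoord_mk, sheetCoord, h, proj_mk, ofProd_mk, z.neg_ne_self, mk_rtildeSigma_neg]

theorem continuousOn_ofProd (c : Circle1) :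
    ContinuousOn (ofProd c) (slitCircle c ×ˢ Set.univ) := by
  have hπ : IsQuotientMap (Prod.map id Rquot.mk : Circle1 × Rtilde → Circle1 × Rquot) :=
    (IsOpenQuotientMap.id.prodMap Rquot.isOpenQuotientMap_mk).isQuotientMap
  refine (hπ.continuousOn_iff_of_isOpen ((isOpen_slitCircle c).prod isOpen_univ)).mpr ?_
  exact isQuotientMap_mk.continuous.comp_continuousOn (continuousOn_snd.prodMk
    ((continuousOn_circleSqrtNear c).comp continuousOn_fst fun _ hp => hp.1))

noncomputable def trivialization (c : Circle1) : Bundle.Trivialization Rquot proj where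
  toFun x := (proj x, fiberCoord c x)
  invFun := ofProd c
  source := proj ⁻¹' slitCircle c
  target := slitCircle c ×ˢ Set.univ
  map_source' _ hx := ⟨hx, trivial⟩
  map_target' y hy := by simpa only [Set.mem_preimage, proj_ofProd] using hy.1
  left_inv' x _ := ofProd_proj_fiberCoord c x
  right_inv' y _ := Prod.ext (proj_ofProd c y) (fiberCoord_ofProd c y)
  open_source := (isOpen_slitCircle c).preimage continuous_proj
  open_target := (isOpen_slitCircle c).prod isOpen_univ
  continuousOn_toFun := continuous_proj.continuousOn.prodMk (continuousOn_fiberCoord c)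
  continuousOn_invFun := continuousOn_ofProd c
  baseSet := slitCircle c
  open_baseSet := isOpen_slitCircle c
  source_eq := rfl
  target_eq := rfl
  proj_toFun _ _ := rfl

end Xquot

/-- The assignment `[(u, z)] ↦ z²` is a well-defined continuous map `X → S¹` which is a
locally trivial fiber bundle with fiber `R`: every point of `S¹` has an open
neighborhood `U` with a homeomorphism `f⁻¹(U) ≅ U × R` commuting with the projections
to `U`. -/
theorem Xquot_fiber_bundle_over_circle :
    ∃ f : Xquot → Circle1,
      Continuous f ∧
      (∀ p : Rtilde × Circle1, f (Quot.mk cobRel p) = circleSq p.2) ∧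
      Function.Surjective f ∧
      ∀ b : Circle1, ∃ U : Set Circle1, IsOpen U ∧ b ∈ U ∧
        ∃ e : (f ⁻¹' U) ≃ₜ U × Rquot, ∀ x : (f ⁻¹' U), ((e x).1 : Circle1) = f x.1 := by
  refine ⟨Xquot.proj, Xquot.continuous_proj, fun _ => rfl, Xquot.surjective_proj, fun b => ?_⟩
  obtain ⟨c, rfl⟩ := circleSq_surjective b
  exact ⟨slitCircle c, isOpen_slitCircle c, circleSq_mem_slitCircle c,
    (Xquot.trivialization c).preimageHomeomorph subset_rfl, fun _ => rfl⟩
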